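/- For any φ ≠ 0 and ψ, ξ ∈ ℝ², the third derivative of T(W)=ν̂(|W|)W satisfies |D³T(φ)(ψ,ψ,ξ)| ≤ (|ν̂'''(|φ|)|·|φ| + 9|ν̂''(|φ|)| + 12|ν̂'(|φ|)|/|φ|)·|ψ|²·|ξ|. -/

import Mathlib

open scoped RealInnerProductSpace

noncomputable section

/-- Third derivative of `T(W) = ν̂(|W|)W` at `φ ≠ 0` in directions `ψ, η, ξ`
(formula (5.6) of the paper), written out via `(a⊗b)c = (b·c)a`. -/
def D3T (ν : ℝ → ℝ) (φ ψ η ξ : EuclideanSpace ℝ (Fin 2)) : EuclideanSpace ℝ (Fin 2) :=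
  ((1 / ‖φ‖ ^ 2) * (deriv (deriv ν) ‖φ‖ - deriv ν ‖φ‖ / ‖φ‖) * ⟪φ, ξ⟫) •
      (⟪φ, η⟫ • ψ + ⟪φ, ψ⟫ • η + ⟪ψ, η⟫ • φ) +
  (deriv ν ‖φ‖ / ‖φ‖) • (⟪ξ, η⟫ • ψ + ⟪ξ, ψ⟫ • η + ⟪ψ, η⟫ • ξ) +
  ((1 / ‖φ‖ ^ 2) * (deriv (deriv ν) ‖φ‖ - deriv ν ‖φ‖ / ‖φ‖)) •
      ((⟪ξ, η⟫ * ⟪φ, ψ⟫) • φ + (⟪φ, η⟫ * ⟪ξ, ψ⟫) • φ + (⟪φ, η⟫ * ⟪φ, ψ⟫) • ξ) +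
  ((deriv (deriv (deriv ν)) ‖φ‖ / ‖φ‖ ^ 3 - 3 * deriv (deriv ν) ‖φ‖ / ‖φ‖ ^ 4 +
      3 * deriv ν ‖φ‖ / ‖φ‖ ^ 5) * (⟪φ, ξ⟫ * (⟪φ, η⟫ * ⟪φ, ψ⟫))) • φ

/-!
Every term of formula (5.6) is a product of inner products and one vector, so Cauchy–Schwarz
bounds it by its coefficient times `‖φ‖ᵏ‖ψ‖‖η‖‖ξ‖`. With `r = ‖φ‖`, the two terms with coefficient
`k = (ν'' - ν'/r)/r²` contribute `6|k|r² ≤ 6|ν''| + 6|ν'|/r`, the term with `p = ν'/r` contributes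
`3|ν'|/r`, and the term with `m = ν'''/r³ - 3ν''/r⁴ + 3ν'/r⁵` contributes
`|m|r⁴ ≤ |ν'''|r + 3|ν''| + 3|ν'|/r`; the sum is the claimed bound.
-/

lemma norm_add₃_le_three_mul {F : Type*} [SeminormedAddCommGroup F] {x y z : F} {B : ℝ}
    (hx : ‖x‖ ≤ B) (hy : ‖y‖ ≤ B) (hz : ‖z‖ ≤ B) : ‖x + y + z‖ ≤ 3 * B := by
  linarith [norm_add₃_le (a := x) (b := y) (c := z)]

section RadialThirdDerivative

variable {E : Type*} [NormedAddCommGroup E] [InnerProductSpace ℝ E]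

lemma norm_inner_smul_le (x y z : E) : ‖⟪x, y⟫ • z‖ ≤ ‖x‖ * ‖y‖ * ‖z‖ := by
  rw [norm_smul, Real.norm_eq_abs]
  gcongr
  exact abs_real_inner_le_norm x y

lemma norm_inner_mul_inner_smul_le (w x y z v : E) :
    ‖(⟪w, x⟫ * ⟪y, z⟫) • v‖ ≤ ‖w‖ * ‖x‖ * (‖y‖ * ‖z‖ * ‖v‖) := by
  rw [mul_smul, norm_smul, Real.norm_eq_abs]
  gcongr
  · exact abs_real_inner_le_norm w x
  · exact norm_inner_smul_le y z v

def radialD3 (k p m : ℝ) (φ ψ η ξ : E) : E :=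
  (k * ⟪φ, ξ⟫) • (⟪φ, η⟫ • ψ + ⟪φ, ψ⟫ • η + ⟪ψ, η⟫ • φ) +
  p • (⟪ξ, η⟫ • ψ + ⟪ξ, ψ⟫ • η + ⟪ψ, η⟫ • ξ) +
  k • ((⟪ξ, η⟫ * ⟪φ, ψ⟫) • φ + (⟪φ, η⟫ * ⟪ξ, ψ⟫) • φ + (⟪φ, η⟫ * ⟪φ, ψ⟫) • ξ) +
  (m * (⟪φ, ξ⟫ * (⟪φ, η⟫ * ⟪φ, ψ⟫))) • φ

lemma norm_radialD3_le (k p m : ℝ) (φ ψ η ξ : E) :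
    ‖radialD3 k p m φ ψ η ξ‖ ≤
      (6 * (|k| * ‖φ‖ ^ 2) + 3 * |p| + |m| * ‖φ‖ ^ 4) * (‖ψ‖ * ‖η‖ * ‖ξ‖) := by
  have hφξ : |⟪φ, ξ⟫| ≤ ‖φ‖ * ‖ξ‖ := abs_real_inner_le_norm φ ξ
  have h₁ : ‖(k * ⟪φ, ξ⟫) • (⟪φ, η⟫ • ψ + ⟪φ, ψ⟫ • η + ⟪ψ, η⟫ • φ)‖ ≤
      3 * (|k| * ‖φ‖ ^ 2) * (‖ψ‖ * ‖η‖ * ‖ξ‖) := by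
    have hsum : ‖⟪φ, η⟫ • ψ + ⟪φ, ψ⟫ • η + ⟪ψ, η⟫ • φ‖ ≤ 3 * (‖φ‖ * ‖ψ‖ * ‖η‖) :=
      norm_add₃_le_three_mul
        ((norm_inner_smul_le φ η ψ).trans_eq (by ring))
        ((norm_inner_smul_le φ ψ η).trans_eq (by ring))
        ((norm_inner_smul_le ψ η φ).trans_eq (by ring))
    calc ‖(k * ⟪φ, ξ⟫) • (⟪φ, η⟫ • ψ + ⟪φ, ψ⟫ • η + ⟪ψ, η⟫ • φ)‖
        = |k| * |⟪φ, ξ⟫| * ‖⟪φ, η⟫ • ψ + ⟪φ, ψ⟫ • η + ⟪ψ, η⟫ • φ‖ := by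
          rw [norm_smul, Real.norm_eq_abs, abs_mul]
      _ ≤ |k| * (‖φ‖ * ‖ξ‖) * (3 * (‖φ‖ * ‖ψ‖ * ‖η‖)) := by gcongr
      _ = 3 * (|k| * ‖φ‖ ^ 2) * (‖ψ‖ * ‖η‖ * ‖ξ‖) := by ring
  have h₂ : ‖p • (⟪ξ, η⟫ • ψ + ⟪ξ, ψ⟫ • η + ⟪ψ, η⟫ • ξ)‖ ≤ 3 * |p| * (‖ψ‖ * ‖η‖ * ‖ξ‖) := by
    have hsum : ‖⟪ξ, η⟫ • ψ + ⟪ξ, ψ⟫ • η + ⟪ψ, η⟫ • ξ‖ ≤ 3 * (‖ψ‖ * ‖η‖ * ‖ξ‖) :=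
      norm_add₃_le_three_mul
        ((norm_inner_smul_le ξ η ψ).trans_eq (by ring))
        ((norm_inner_smul_le ξ ψ η).trans_eq (by ring))
        (norm_inner_smul_le ψ η ξ)
    rw [norm_smul, Real.norm_eq_abs, mul_comm 3 |p|, mul_assoc]
    gcongr
  have h₃ : ‖k • ((⟪ξ, η⟫ * ⟪φ, ψ⟫) • φ + (⟪φ, η⟫ * ⟪ξ, ψ⟫) • φ + (⟪φ, η⟫ * ⟪φ, ψ⟫) • ξ)‖ ≤
      3 * (|k| * ‖φ‖ ^ 2) * (‖ψ‖ * ‖η‖ * ‖ξ‖) := by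
    have hsum : ‖(⟪ξ, η⟫ * ⟪φ, ψ⟫) • φ + (⟪φ, η⟫ * ⟪ξ, ψ⟫) • φ + (⟪φ, η⟫ * ⟪φ, ψ⟫) • ξ‖ ≤
        3 * (‖φ‖ ^ 2 * (‖ψ‖ * ‖η‖ * ‖ξ‖)) :=
      norm_add₃_le_three_mul
        ((norm_inner_mul_inner_smul_le ξ η φ ψ φ).trans_eq (by ring))
        ((norm_inner_mul_inner_smul_le φ η ξ ψ φ).trans_eq (by ring))
        ((norm_inner_mul_inner_smul_le φ η φ ψ ξ).trans_eq (by ring))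
    rw [norm_smul, Real.norm_eq_abs]
    calc |k| * ‖(⟪ξ, η⟫ * ⟪φ, ψ⟫) • φ + (⟪φ, η⟫ * ⟪ξ, ψ⟫) • φ + (⟪φ, η⟫ * ⟪φ, ψ⟫) • ξ‖
        ≤ |k| * (3 * (‖φ‖ ^ 2 * (‖ψ‖ * ‖η‖ * ‖ξ‖))) := by gcongr
      _ = 3 * (|k| * ‖φ‖ ^ 2) * (‖ψ‖ * ‖η‖ * ‖ξ‖) := by ring
  have h₄ : ‖(m * (⟪φ, ξ⟫ * (⟪φ, η⟫ * ⟪φ, ψ⟫))) • φ‖ ≤ |m| * ‖φ‖ ^ 4 * (‖ψ‖ * ‖η‖ * ‖ξ‖) := by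
    have hφηψ : ‖(⟪φ, η⟫ * ⟪φ, ψ⟫) • φ‖ ≤ ‖φ‖ ^ 3 * (‖ψ‖ * ‖η‖) :=
      (norm_inner_mul_inner_smul_le φ η φ ψ φ).trans_eq (by ring)
    calc ‖(m * (⟪φ, ξ⟫ * (⟪φ, η⟫ * ⟪φ, ψ⟫))) • φ‖
        = |m| * |⟪φ, ξ⟫| * ‖(⟪φ, η⟫ * ⟪φ, ψ⟫) • φ‖ := by
          rw [← mul_assoc, mul_smul, norm_smul, Real.norm_eq_abs, abs_mul]
      _ ≤ |m| * (‖φ‖ * ‖ξ‖) * (‖φ‖ ^ 3 * (‖ψ‖ * ‖η‖)) := by gcongr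
      _ = |m| * ‖φ‖ ^ 4 * (‖ψ‖ * ‖η‖ * ‖ξ‖) := by ring
  calc ‖radialD3 k p m φ ψ η ξ‖
      ≤ 3 * (|k| * ‖φ‖ ^ 2) * (‖ψ‖ * ‖η‖ * ‖ξ‖) + 3 * |p| * (‖ψ‖ * ‖η‖ * ‖ξ‖) +
          3 * (|k| * ‖φ‖ ^ 2) * (‖ψ‖ * ‖η‖ * ‖ξ‖) + |m| * ‖φ‖ ^ 4 * (‖ψ‖ * ‖η‖ * ‖ξ‖) :=
        (norm_add₄_le ..).trans (by gcongr)
    _ = (6 * (|k| * ‖φ‖ ^ 2) + 3 * |p| + |m| * ‖φ‖ ^ 4) * (‖ψ‖ * ‖η‖ * ‖ξ‖) := by ring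

end RadialThirdDerivative

lemma D3T_eq_radialD3 (ν : ℝ → ℝ) (φ ψ η ξ : EuclideanSpace ℝ (Fin 2)) :
    D3T ν φ ψ η ξ =
      radialD3 ((1 / ‖φ‖ ^ 2) * (deriv (deriv ν) ‖φ‖ - deriv ν ‖φ‖ / ‖φ‖))
        (deriv ν ‖φ‖ / ‖φ‖)
        (deriv (deriv (deriv ν)) ‖φ‖ / ‖φ‖ ^ 3 - 3 * deriv (deriv ν) ‖φ‖ / ‖φ‖ ^ 4 +
          3 * deriv ν ‖φ‖ / ‖φ‖ ^ 5) φ ψ η ξ :=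
  rfl

lemma abs_radial_coeff_mul_sq_le {r : ℝ} (hr : 0 < r) (a b : ℝ) :
    |1 / r ^ 2 * (b - a / r)| * r ^ 2 ≤ |b| + |a| / r := by
  calc |1 / r ^ 2 * (b - a / r)| * r ^ 2 = |b - a / r| := by
        rw [← abs_of_pos (pow_pos hr 2), ← abs_mul, abs_of_pos (pow_pos hr 2)]
        field_simp
    _ ≤ |b| + |a / r| := abs_sub _ _
    _ = |b| + |a| / r := by rw [abs_div, abs_of_pos hr]

lemma abs_radial_coeff_mul_pow_four_le {r : ℝ} (hr : 0 < r) (a b c : ℝ) :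
    |c / r ^ 3 - 3 * b / r ^ 4 + 3 * a / r ^ 5| * r ^ 4 ≤ |c| * r + 3 * |b| + 3 * |a| / r := by
  calc |c / r ^ 3 - 3 * b / r ^ 4 + 3 * a / r ^ 5| * r ^ 4 = |c * r - 3 * b + 3 * a / r| := by
        rw [← abs_of_pos (pow_pos hr 4), ← abs_mul, abs_of_pos (pow_pos hr 4)]
        congr 1
        field_simp
    _ ≤ |c * r - 3 * b| + |3 * a / r| := abs_add_le _ _
    _ ≤ |c * r| + |3 * b| + |3 * a / r| := by gcongr; exact abs_sub _ _
    _ = |c| * r + 3 * |b| + 3 * |a| / r := by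
        simp only [abs_mul, abs_div, abs_of_pos hr, abs_of_pos (three_pos (α := ℝ))]

theorem D3T_bound (ν : ℝ → ℝ) :
    ∀ φ : EuclideanSpace ℝ (Fin 2), φ ≠ 0 →
    ∀ ψ ξ : EuclideanSpace ℝ (Fin 2),
      ‖D3T ν φ ψ ψ ξ‖ ≤
        (|deriv (deriv (deriv ν)) ‖φ‖| * ‖φ‖ + 9 * |deriv (deriv ν) ‖φ‖| +
          12 * |deriv ν ‖φ‖| / ‖φ‖) * ‖ψ‖ ^ 2 * ‖ξ‖ := by
  intro φ hφ ψ ξ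
  have hr : 0 < ‖φ‖ := norm_pos_iff.mpr hφ
  set a := deriv ν ‖φ‖
  set b := deriv (deriv ν) ‖φ‖
  set c := deriv (deriv (deriv ν)) ‖φ‖
  have hk := abs_radial_coeff_mul_sq_le hr a b
  have hm := abs_radial_coeff_mul_pow_four_le hr a b c
  have hp : |a / ‖φ‖| = |a| / ‖φ‖ := by rw [abs_div, abs_norm]
  calc ‖D3T ν φ ψ ψ ξ‖
      ≤ (6 * (|1 / ‖φ‖ ^ 2 * (b - a / ‖φ‖)| * ‖φ‖ ^ 2) + 3 * |a / ‖φ‖| +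
          |c / ‖φ‖ ^ 3 - 3 * b / ‖φ‖ ^ 4 + 3 * a / ‖φ‖ ^ 5| * ‖φ‖ ^ 4) * (‖ψ‖ * ‖ψ‖ * ‖ξ‖) := by
        rw [D3T_eq_radialD3]; exact norm_radialD3_le _ _ _ φ ψ ψ ξ
    _ ≤ (6 * (|b| + |a| / ‖φ‖) + 3 * (|a| / ‖φ‖) + (|c| * ‖φ‖ + 3 * |b| + 3 * |a| / ‖φ‖)) *
          (‖ψ‖ * ‖ψ‖ * ‖ξ‖) := by rw [hp]; gcongr
    _ = (|c| * ‖φ‖ + 9 * |b| + 12 * |a| / ‖φ‖) * ‖ψ‖ ^ 2 * ‖ξ‖ := by ring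

end
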